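/- arXiv:1705.04268 — 3 statements merged into one kernel-verified Lean document; each statement's English description precedes it below -/
import Mathlib

section
/- In the ring R, the identity w8^(q^2) + w8 = (w7^q)^(3q0) * ℓ^q + w7^(3q0) * ℓ - w8 holds. -/
noncomputable section

open MvPolynomial

abbrev F := ZMod 3

def q0 (s : ℕ) : ℕ := 3 ^ s
def q (s : ℕ) : ℕ := 3 ^ (2 * s + 1)

def ReeIdeal (s : ℕ) : Ideal (MvPolynomial (Fin 3) F) :=
  Ideal.span
    { X 1 ^ q s - X 1 - X 0 ^ q0 s * (X 0 ^ q s - X 0),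
      X 2 ^ q s - X 2 - X 0 ^ q0 s * (X 1 ^ q s - X 1) }

abbrev R (s : ℕ) : Type := MvPolynomial (Fin 3) F ⧸ ReeIdeal s

def x (s : ℕ) : R s := Ideal.Quotient.mk _ (X 0)
def y (s : ℕ) : R s := Ideal.Quotient.mk _ (X 1)
def z (s : ℕ) : R s := Ideal.Quotient.mk _ (X 2)

def w1 (s : ℕ) : R s := x s ^ (3 * q0 s + 1) - y s ^ (3 * q0 s)
def w2 (s : ℕ) : R s := x s * y s ^ (3 * q0 s) - z s ^ (3 * q0 s)
def w3 (s : ℕ) : R s := x s * z s ^ (3 * q0 s) - w1 s ^ (3 * q0 s)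
def w4 (s : ℕ) : R s := x s * w2 s ^ q0 s - y s * w1 s ^ q0 s
def v (s : ℕ) : R s := x s * w3 s ^ q0 s - z s * w1 s ^ q0 s
def w5 (s : ℕ) : R s := y s * w3 s ^ q0 s - z s * w2 s ^ q0 s
def w6 (s : ℕ) : R s := v s ^ (3 * q0 s) - w2 s ^ (3 * q0 s) + x s * w4 s ^ (3 * q0 s)
def w7 (s : ℕ) : R s := w2 s + v s
def w8 (s : ℕ) : R s := w5 s ^ (3 * q0 s) + x s * w7 s ^ (3 * q0 s)
def w9 (s : ℕ) : R s := w4 s * w2 s ^ q0 s - y s * w6 s ^ q0 s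
def w10 (s : ℕ) : R s := z s * w6 s ^ q0 s - w3 s ^ q0 s * w4 s
def ell (s : ℕ) : R s := x s ^ q s - x s



section Aux
variable {A : Type*} [CommRing A]

lemma cube_add' (h3 : (3:A) = 0) (a b : A) : (a+b)^3 = a^3 + b^3 := by
  linear_combination (a^2*b + a*b^2) * h3

lemma pow3k_add' {A : Type*} [CommRing A] (h3 : (3:A) = 0) (k : ℕ) (a b : A) :
    (a+b)^(3^k) = a^(3^k) + b^(3^k) := by
  induction k with
  | zero => simp
  | succ k ih =>
      rw [pow_succ, pow_mul, pow_mul, pow_mul, ih, cube_add' h3]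

def powHom' {A : Type*} [CommRing A] (h3 : (3:A) = 0) (k : ℕ) : A →+* A where
  toFun a := a ^ 3^k
  map_one' := one_pow _
  map_mul' a b := mul_pow a b _
  map_zero' := zero_pow (by positivity)
  map_add' a b := pow3k_add' h3 k a b

@[simp] lemma powHom'_apply {A : Type*} [CommRing A] (h3 : (3:A) = 0) (k : ℕ) (a : A) :
    powHom' h3 k a = a ^ 3^k := rfl

lemma abstract_key (h3 : (3:A) = 0) (φ ψ Fr : A →+* A)
    (hψ : ∀ t, ψ t = φ t ^ 3)
    (hF : ∀ t, Fr t = φ (ψ t))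
    (x y z ℓ w1 w2 w3 vv w5 w7 w8 : A)
    (hℓ : ℓ = Fr x - x)
    (hy : Fr y - y = φ x * (Fr x - x))
    (hz : Fr z - z = φ x * (Fr y - y))
    (hw1 : w1 = x * ψ x - ψ y)
    (hw2 : w2 = x * ψ y - ψ z)
    (hw3 : w3 = x * ψ z - ψ w1)
    (hv : vv = x * φ w3 - z * φ w1)
    (hw5 : w5 = y * φ w3 - z * φ w2)
    (hw7 : w7 = w2 + vv)
    (hw8 : w8 = ψ w5 + x * ψ w7) :
    Fr (Fr w8) + w8 = ψ (Fr w7) * Fr ℓ + ψ w7 * ℓ - w8 := by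
  have hcomm : ∀ t, ψ (φ t) = φ (ψ t) := fun t => by rw [hψ, hψ, map_pow]
  have hψφ : ∀ t, ψ (φ t) = Fr t := fun t => by rw [hcomm, ← hF]
  have hFψ : ∀ t, Fr (ψ t) = ψ (Fr t) := fun t => by rw [hF, hF, hcomm]
  have hFφ : ∀ t, Fr (φ t) = φ (Fr t) := fun t => by rw [hF, hcomm, ← hF]
  have hψψ : ∀ t, ψ (ψ t) = Fr t ^ 3 := fun t => by rw [hψ (ψ t), ← hcomm, hψφ]
  have hφψ : ∀ t, φ (ψ t) = Fr t := fun t => (hF t).symm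
  have Fx : Fr x = x + ℓ := by rw [hℓ]; ring
  have Fy : Fr y = y + φ x * ℓ := by rw [hℓ]; linear_combination hy
  have Fz : Fr z = z + φ x ^ 2 * ℓ := by
    rw [hℓ]; linear_combination hz + φ x * hy
  have hFw1 : Fr w1 = w1 + ψ x * ℓ := by
    simp only [hw1, map_sub, map_mul, map_add, map_pow, hFψ, hψφ, Fx, Fy]
    ring
  have hFw2 : Fr w2 = w2 + ψ y * ℓ := by
    simp only [hw2, map_sub, map_mul, map_add, map_pow, hFψ, hψφ, Fx, Fy, Fz]
    ring
  have hFw3 : Fr w3 = w3 + ψ z * ℓ := by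
    simp only [hw3, map_sub, map_mul, map_add, map_pow, hFψ, hψφ, hψψ, hFw1,
      Fx, Fz]
    ring
  have hFv : Fr vv = vv + (φ w3 - φ x ^ 2 * φ w1) * ℓ := by
    simp only [hv, map_sub, map_mul, map_add, map_pow, hFφ, hFw3, hFw1, hφψ,
      Fx, Fz]
    ring
  have hFw5 : Fr w5 = w5 + (φ x * φ w3 - φ x ^ 2 * φ w2) * ℓ := by
    simp only [hw5, map_sub, map_mul, map_add, map_pow, hFφ, hFw3, hFw2, hφψ,
      Fy, Fz]
    ring
  have hFw7 : Fr w7 = w7 + (φ y ^ 3 + φ w3 - φ x ^ 2 * φ w1) * ℓ := by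
    rw [hw7, map_add, hFw2, hFv, hψ y]
    ring
  have hsw1 : ψ w1 = x ^ 3 * φ x ^ 3 - y ^ 3 := by
    simp only [hw1, map_sub, map_mul, map_pow, hψψ, hψφ, hψ x, Fx, Fy]
    linear_combination (φ x ^ 3 * (x^2*ℓ + x*ℓ^2) - y^2*(φ x)*ℓ - y*(φ x)^2*ℓ^2) * h3
  have G : Fr w8 = w8 + ψ w7 * ℓ := by
    simp only [hw8, map_add, map_mul, map_sub, map_pow, hFψ, hψφ, hFw5, hFw7,
      hFw1, hFw2, hFw3, Fx, Fy]
    simp only [hw1, hw2, hw3, hsw1, hψ x, map_sub, map_mul, map_add, map_pow,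
      hψφ, hψψ, Fx, Fy]
    linear_combination (ℓ^2*(ψ z)*(ψ ℓ) + y*ℓ^3*(φ x)^2*(ψ ℓ) + y^2*ℓ^2*(φ x)*(ψ ℓ)
      + y^3*ℓ*(ψ ℓ) + 2*x*ℓ*(ψ z)*(ψ ℓ) - x*ℓ^3*(φ x)^3*(ψ ℓ)
      + x*y*ℓ^2*(φ x)^2*(ψ ℓ) + x*y^2*ℓ*(φ x)*(ψ ℓ) + x*y^3*(ψ ℓ)
      + x^2*(ψ z)*(ψ ℓ) - 2*x^2*ℓ^2*(φ x)^3*(ψ ℓ) - 2*x^3*ℓ*(φ x)^3*(ψ ℓ)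
      - x^4*(φ x)^3*(ψ ℓ)
      + 2*x*ℓ*(φ x)*y^2*(ψ ℓ) + 2*x*ℓ^2*(φ x)^2*y*(ψ ℓ) - 2*x*ℓ^3*(φ x)^3*(ψ ℓ)
      - 4*x^2*ℓ^2*(φ x)^3*(ψ ℓ) - 2*x^3*ℓ*(φ x)^3*(ψ ℓ)
      + 2*ℓ^2*(φ x)*y^2*(ψ ℓ) + 2*ℓ^3*(φ x)^2*y*(ψ ℓ)) * h3
  have G2 : Fr (Fr w8) = Fr w8 + ψ (Fr w7) * Fr ℓ := by
    conv_lhs => rw [G]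
    rw [map_add, map_mul, hFψ]
  rw [G2, G]
  linear_combination w8 * h3

end Aux

lemma h3R (s : ℕ) : (3 : R s) = 0 := by
  have h : (3 : F) = 0 := by decide
  calc (3 : R s) = algebraMap F (R s) 3 := (map_ofNat _ 3).symm
    _ = 0 := by rw [h, map_zero]

lemma rel1 (s : ℕ) : y s ^ q s - y s - x s ^ q0 s * (x s ^ q s - x s) = 0 := by
  have hm : (X 1 ^ q s - X 1 - X 0 ^ q0 s * (X 0 ^ q s - X 0) : MvPolynomial (Fin 3) F)
      ∈ ReeIdeal s := Ideal.subset_span (Set.mem_insert _ _)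
  have h := Ideal.Quotient.eq_zero_iff_mem.mpr hm
  simp only [map_sub, map_mul, map_pow] at h
  simpa only [x, y] using h

lemma rel2 (s : ℕ) : z s ^ q s - z s - x s ^ q0 s * (y s ^ q s - y s) = 0 := by
  have hm : (X 2 ^ q s - X 2 - X 0 ^ q0 s * (X 1 ^ q s - X 1) : MvPolynomial (Fin 3) F)
      ∈ ReeIdeal s := Ideal.subset_span (Set.mem_insert_of_mem _ rfl)
  have h := Ideal.Quotient.eq_zero_iff_mem.mpr hm
  simp only [map_sub, map_mul, map_pow] at h
  simpa only [x, y, z] using h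

theorem stmt1 (s : ℕ) (hs : 1 ≤ s) :
    w8 s ^ (q s ^ 2) + w8 s
      = (w7 s ^ q s) ^ (3 * q0 s) * ell s ^ q s + w7 s ^ (3 * q0 s) * ell s - w8 s := by
  have h3 := h3R s
  have e : 3 * q0 s = 3 ^ (s + 1) := by rw [q0, pow_succ']
  have eq' : q s = 3 ^ (2 * s + 1) := rfl
  have hψ : ∀ t : R s, powHom' h3 (s+1) t = powHom' h3 s t ^ 3 := by
    intro t
    simp only [powHom'_apply]
    rw [← pow_mul, ← pow_succ]
  have hF : ∀ t : R s, powHom' h3 (2*s+1) t = powHom' h3 s (powHom' h3 (s+1) t) := by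
    intro t
    simp only [powHom'_apply]
    rw [← pow_mul, ← pow_add]
    have : s + 1 + s = 2 * s + 1 := by omega
    rw [this]
  have r1 : y s ^ 3 ^ (2*s+1) - y s - x s ^ 3 ^ s * (x s ^ 3 ^ (2*s+1) - x s) = 0 := rel1 s
  have r2 : z s ^ 3 ^ (2*s+1) - z s - x s ^ 3 ^ s * (y s ^ 3 ^ (2*s+1) - y s) = 0 := rel2 s
  have hℓ : ell s = powHom' h3 (2*s+1) (x s) - x s := rfl
  have hy : powHom' h3 (2*s+1) (y s) - y s
      = powHom' h3 s (x s) * (powHom' h3 (2*s+1) (x s) - x s) := by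
    simp only [powHom'_apply]
    linear_combination r1
  have hz : powHom' h3 (2*s+1) (z s) - z s
      = powHom' h3 s (x s) * (powHom' h3 (2*s+1) (y s) - y s) := by
    simp only [powHom'_apply]
    linear_combination r2
  have hw1 : w1 s = x s * powHom' h3 (s+1) (x s) - powHom' h3 (s+1) (y s) := by
    simp only [powHom'_apply]
    rw [w1, e, pow_succ]
    ring
  have hw2 : w2 s = x s * powHom' h3 (s+1) (y s) - powHom' h3 (s+1) (z s) := by
    simp only [powHom'_apply]
    rw [w2, e]
  have hw3 : w3 s = x s * powHom' h3 (s+1) (z s) - powHom' h3 (s+1) (w1 s) := by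
    simp only [powHom'_apply]
    rw [w3, e]
  have hv : v s = x s * powHom' h3 s (w3 s) - z s * powHom' h3 s (w1 s) := rfl
  have hw5 : w5 s = y s * powHom' h3 s (w3 s) - z s * powHom' h3 s (w2 s) := rfl
  have hw7 : w7 s = w2 s + v s := rfl
  have hw8 : w8 s = powHom' h3 (s+1) (w5 s) + x s * powHom' h3 (s+1) (w7 s) := by
    simp only [powHom'_apply]
    rw [w8, e]
  have key := abstract_key h3 (powHom' h3 s) (powHom' h3 (s+1)) (powHom' h3 (2*s+1))
    hψ hF (x s) (y s) (z s) (ell s) (w1 s) (w2 s) (w3 s) (v s) (w5 s) (w7 s) (w8 s)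
    hℓ hy hz hw1 hw2 hw3 hv hw5 hw7 hw8
  simp only [powHom'_apply] at key
  have e2 : q s ^ 2 = 3 ^ (2*s+1) * 3 ^ (2*s+1) := by rw [eq']; ring
  rw [e2, pow_mul, e, eq']
  exact key
end
end

section
/- In the ring R, the identity w1*w3^(q^2) + w1^(q^2)*w3 = ((z^q)^(3q0)*w1 + (x^q)^(3q0)*w3)*ℓ^q + (z^(3q0)*w1 + x^(3q0)*w3)*ℓ - w1*w3 holds. -/
noncomputable section

open MvPolynomial

lemma ree_ne_top (s : ℕ) : ReeIdeal s ≠ ⊤ := by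
  intro h
  have hle : ReeIdeal s ≤ RingHom.ker (eval (0 : Fin 3 → F)) := by
    apply Ideal.span_le.mpr
    intro p hp
    simp only [Set.mem_insert_iff, Set.mem_singleton_iff] at hp
    rcases hp with rfl | rfl <;>
      simp [RingHom.mem_ker, q, q0, zero_pow, pow_succ]
  have h1 : (1 : MvPolynomial (Fin 3) F) ∈ RingHom.ker (eval (0 : Fin 3 → F)) :=
    hle (h ▸ Submodule.mem_top)
  simp [RingHom.mem_ker] at h1

instance (s : ℕ) : Nontrivial (R s) := Ideal.Quotient.nontrivial_iff.mpr (ree_ne_top s)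

instance (s : ℕ) : CharP (R s) 3 :=
  charP_of_injective_ringHom (algebraMap (ZMod 3) (R s)).injective 3

instance : Fact (Nat.Prime 3) := ⟨by norm_num⟩

lemma rel_y (s : ℕ) : y s ^ q s = y s + x s ^ q0 s * ell s := by
  have h0 : (Ideal.Quotient.mk (ReeIdeal s))
      (X 1 ^ q s - X 1 - X 0 ^ q0 s * (X 0 ^ q s - X 0)) = 0 :=
    Ideal.Quotient.eq_zero_iff_mem.mpr (Ideal.subset_span (by simp))
  simp only [map_sub, map_mul, map_pow] at h0
  simp only [ell, y, x]
  linear_combination h0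

lemma rel_z (s : ℕ) : z s ^ q s = z s + x s ^ q0 s * (x s ^ q0 s * ell s) := by
  have h0 : (Ideal.Quotient.mk (ReeIdeal s))
      (X 2 ^ q s - X 2 - X 0 ^ q0 s * (X 1 ^ q s - X 1)) = 0 :=
    Ideal.Quotient.eq_zero_iff_mem.mpr (Ideal.subset_span (by simp))
  simp only [map_sub, map_mul, map_pow] at h0
  have hy := rel_y s
  simp only [ell, x, y, z] at hy ⊢
  linear_combination h0 + (Ideal.Quotient.mk (ReeIdeal s)) (X 0) ^ q0 s * hy

lemma frob_q0_sub (s : ℕ) (a b : R s) : (a - b) ^ q0 s = a ^ q0 s - b ^ q0 s := by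
  rw [q0]; exact sub_pow_char_pow a b s

lemma frob_3q0_sub (s : ℕ) (a b : R s) :
    (a - b) ^ (3 * q0 s) = a ^ (3 * q0 s) - b ^ (3 * q0 s) := by
  rw [show 3 * q0 s = 3 ^ (s + 1) by rw [q0]; ring]; exact sub_pow_char_pow a b (s + 1)

lemma frob_q_add (s : ℕ) (a b : R s) : (a + b) ^ q s = a ^ q s + b ^ q s := by
  rw [q]; exact add_pow_char_pow a b 3 (2 * s + 1)

lemma ell_def (s : ℕ) : ell s = x s ^ q s - x s := rfl

lemma w1_pow_q0 (s : ℕ) : w1 s ^ q0 s = x s ^ (q0 s + 1) - y s := by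
  rw [w1, frob_q0_sub, ← pow_mul, ← pow_mul,
    show (3 * q0 s + 1) * q0 s = q s + q0 s by simp [q0, q]; ring,
    show 3 * q0 s * q0 s = q s by simp [q0, q]; ring, pow_add, rel_y]
  linear_combination (- x s ^ q0 s) * ell_def s

lemma w1_pow_q (s : ℕ) : w1 s ^ q s = w1 s + x s ^ (3 * q0 s) * ell s := by
  rw [show q s = q0 s * (3 * q0 s) by simp [q0, q]; ring, pow_mul, w1_pow_q0,
    frob_3q0_sub, ← pow_mul,
    show (q0 s + 1) * (3 * q0 s) = q s + 3 * q0 s by simp [q0, q]; ring, pow_add, w1]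
  linear_combination (- x s ^ (3 * q0 s)) * ell_def s

lemma w3_pow_q0 (s : ℕ) : w3 s ^ q0 s = x s ^ q0 s * z s - w1 s := by
  rw [w3, frob_q0_sub, mul_pow, ← pow_mul, ← pow_mul,
    show 3 * q0 s * q0 s = q s by simp [q0, q]; ring, rel_z, w1_pow_q]
  ring

lemma w3_pow_q (s : ℕ) : w3 s ^ q s = w3 s + z s ^ (3 * q0 s) * ell s := by
  rw [show q s = q0 s * (3 * q0 s) by simp [q0, q]; ring, pow_mul, w3_pow_q0,
    frob_3q0_sub, mul_pow, ← pow_mul,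
    show q0 s * (3 * q0 s) = q s by simp [q0, q]; ring, w3]
  linear_combination (- z s ^ (3 * q0 s)) * ell_def s

lemma w1_pow_q2 (s : ℕ) : w1 s ^ (q s ^ 2)
    = w1 s + x s ^ (3 * q0 s) * ell s + (x s ^ q s) ^ (3 * q0 s) * ell s ^ q s := by
  rw [sq, pow_mul, w1_pow_q, frob_q_add, w1_pow_q, mul_pow, ← pow_mul,
    show 3 * q0 s * q s = q s * (3 * q0 s) by ring, pow_mul]
  ring

lemma w3_pow_q2 (s : ℕ) : w3 s ^ (q s ^ 2)
    = w3 s + z s ^ (3 * q0 s) * ell s + (z s ^ q s) ^ (3 * q0 s) * ell s ^ q s := by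
  rw [sq, pow_mul, w3_pow_q, frob_q_add, w3_pow_q, mul_pow, ← pow_mul,
    show 3 * q0 s * q s = q s * (3 * q0 s) by ring, pow_mul]
  ring

theorem stmt3 (s : ℕ) (hs : 1 ≤ s) :
    w1 s * w3 s ^ (q s ^ 2) + w1 s ^ (q s ^ 2) * w3 s
      = ((z s ^ q s) ^ (3 * q0 s) * w1 s + (x s ^ q s) ^ (3 * q0 s) * w3 s) * ell s ^ q s
        + (z s ^ (3 * q0 s) * w1 s + x s ^ (3 * q0 s) * w3 s) * ell s - w1 s * w3 s := by
  have h3 : (3 : R s) = 0 := by exact_mod_cast CharP.cast_eq_zero (R s) 3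
  rw [w1_pow_q2, w3_pow_q2]
  linear_combination (w1 s * w3 s) * h3
end
end

section
/- In the ring R, the following five identities (the 'type 1' Pedersen relations) hold: w1^q - w1 = x^(3q0)*(x^q - x); w2^q - w2 = y^(3q0)*(x^q - x); w3^q - w3 = z^(3q0)*(x^q - x); w6^q - w6 = w4^(3q0)*(x^q - x); w8^q - w8 = w7^(3q0)*(x^q - x). -/
noncomputable section

open MvPolynomial

lemma charPR (s : ℕ) : CharP (R s) 3 := by
  apply CharP.quotient' 3
  intro n hn
  have hle : ReeIdeal s ≤ RingHom.ker (eval (0 : Fin 3 → F)) := by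
    rw [ReeIdeal, Ideal.span_le]
    intro p hp
    simp only [Set.mem_insert_iff, Set.mem_singleton_iff] at hp
    have h0 : ∀ i : Fin 3, eval (0 : Fin 3 → F) (X i) = 0 := by intro i; simp
    rcases hp with rfl | rfl <;>
      · rw [SetLike.mem_coe, RingHom.mem_ker]
        simp only [map_sub, map_mul, map_pow, h0]
        rw [zero_pow (by unfold q; positivity), zero_pow (by unfold q0; positivity)]
        ring
  have := hle hn
  rw [RingHom.mem_ker, map_natCast] at this
  have h2 : (n : F) = 0 := this
  calc (n : MvPolynomial (Fin 3) F) = C (n : F) := by rw [map_natCast]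
  _ = 0 := by rw [h2, map_zero]

section
variable (s : ℕ)
local instance : CharP (R s) 3 := charPR s
local instance inst_s5 : Fact (Nat.Prime 3) := ⟨by norm_num⟩

-- Frobenius expansion lemmas
lemma addq (u u' : R s) : (u + u') ^ q s = u ^ q s + u' ^ q s := by
  rw [q]; exact add_pow_char_pow ..
lemma subq (u u' : R s) : (u - u') ^ q s = u ^ q s - u' ^ q s := by
  rw [q]; exact sub_pow_char_pow ..
lemma addq0 (u u' : R s) : (u + u') ^ q0 s = u ^ q0 s + u' ^ q0 s := by
  rw [q0]; exact add_pow_char_pow ..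
lemma subq0 (u u' : R s) : (u - u') ^ q0 s = u ^ q0 s - u' ^ q0 s := by
  rw [q0]; exact sub_pow_char_pow ..
lemma h3q0 : 3 * q0 s = 3 ^ (s + 1) := by rw [q0, pow_succ, mul_comm]
lemma add3 (u u' : R s) : (u + u') ^ (3 * q0 s) = u ^ (3 * q0 s) + u' ^ (3 * q0 s) := by
  rw [h3q0]; exact add_pow_char_pow ..
lemma sub3 (u u' : R s) : (u - u') ^ (3 * q0 s) = u ^ (3 * q0 s) - u' ^ (3 * q0 s) := by
  rw [h3q0]; exact sub_pow_char_pow ..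
lemma addc (u u' : R s) : (u + u') ^ 3 = u ^ 3 + u' ^ 3 := add_pow_char ..

-- power composition
lemma c1 (u : R s) : (u ^ q0 s) ^ (3 * q0 s) = u ^ q s := by
  rw [← pow_mul]; congr 1; rw [q0, q]; ring
lemma c2 (u : R s) : (u ^ (3 * q0 s)) ^ q0 s = u ^ q s := by
  rw [← pow_mul]; congr 1; rw [q0, q]; ring
lemma c3 (u : R s) : (u ^ (3 * q0 s)) ^ (3 * q0 s) = (u ^ q s) ^ 3 := by
  rw [← pow_mul, ← pow_mul]; congr 1; rw [q0, q]; ring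
lemma c4 (u : R s) : (u ^ q0 s) ^ 3 = u ^ (3 * q0 s) := by
  rw [← pow_mul, mul_comm]
lemma prc (u : R s) (m n : ℕ) : (u ^ m) ^ n = (u ^ n) ^ m := by
  rw [← pow_mul, ← pow_mul, mul_comm]

-- base relations
lemma hxq : x s ^ q s = x s + ell s := by rw [ell]; ring
lemma hyq : y s ^ q s = y s + x s ^ q0 s * ell s := by
  have h : (Ideal.Quotient.mk (ReeIdeal s)) (X 1 ^ q s - X 1 - X 0 ^ q0 s * (X 0 ^ q s - X 0)) = 0 :=
    Ideal.Quotient.eq_zero_iff_mem.mpr (Ideal.subset_span (Set.mem_insert _ _))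
  simp only [map_sub, map_mul, map_pow] at h
  rw [ell]
  show y s ^ q s = y s + x s ^ q0 s * (x s ^ q s - x s)
  rw [x, y] at *
  linear_combination h
lemma hzq : z s ^ q s = z s + x s ^ q0 s * (x s ^ q0 s * ell s) := by
  have h : (Ideal.Quotient.mk (ReeIdeal s)) (X 2 ^ q s - X 2 - X 0 ^ q0 s * (X 1 ^ q s - X 1)) = 0 :=
    Ideal.Quotient.eq_zero_iff_mem.mpr
      (Ideal.subset_span (Set.mem_insert_of_mem _ rfl))
  simp only [map_sub, map_mul, map_pow] at h
  have hy := hyq s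
  rw [x, y, z] at *
  linear_combination h + (Ideal.Quotient.mk (ReeIdeal s) (X 0) ^ q0 s) * hy
lemma cq3 (u : R s) : (u ^ (3 * q0 s)) ^ q s = (u ^ q s) ^ (3 * q0 s) := prc ..
lemma cqq0 (u : R s) : (u ^ q0 s) ^ q s = (u ^ q s) ^ q0 s := prc ..
lemma subc (u u' : R s) : (u - u') ^ 3 = u ^ 3 - u' ^ 3 := sub_pow_char ..

lemma L1 : w1 s ^ q s = w1 s + x s ^ (3 * q0 s) * ell s := by
  rw [w1]
  simp only [subq, pow_succ, mul_pow, cq3, hxq, hyq, add3, c1, mul_pow]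
  ring
lemma L2 : w2 s ^ q s = w2 s + y s ^ (3 * q0 s) * ell s := by
  rw [w2]
  simp only [subq, mul_pow, cq3, hxq, hyq, hzq, add3, c1, mul_pow]
  ring
lemma L3 : w3 s ^ q s = w3 s + z s ^ (3 * q0 s) * ell s := by
  rw [w3]
  simp only [subq, mul_pow, cq3, hxq, hzq, L1, add3, c1, c2, c3, mul_pow]
  ring
lemma L4 : w4 s ^ q s = w4 s + (w2 s ^ q0 s - x s ^ q0 s * w1 s ^ q0 s) * ell s := by
  rw [w4]
  simp only [subq, mul_pow, cqq0, hxq, hyq, L1, L2, addq0, subq0, add3, c1, c2, mul_pow]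
  ring
lemma Lv : v s ^ q s = v s + (w3 s ^ q0 s - x s ^ q0 s * (x s ^ q0 s * w1 s ^ q0 s)) * ell s := by
  rw [v]
  simp only [subq, mul_pow, cqq0, hxq, hzq, L1, L3, addq0, subq0, add3, c1, c2, mul_pow]
  ring
lemma L5 : w5 s ^ q s = w5 s + (x s ^ q0 s * w3 s ^ q0 s - x s ^ q0 s * (x s ^ q0 s * w2 s ^ q0 s)) * ell s := by
  rw [w5]
  simp only [subq, mul_pow, cqq0, hxq, hyq, hzq, L2, L3, addq0, subq0, add3, c1, c2, mul_pow]
  ring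
lemma psx : x s ^ (3 * q0 s + 1) = x s ^ (3 * q0 s) * x s := pow_succ ..
lemma Lkey : w3 s + x s * w2 s + x s * x s * w1 s = y s ^ 3 := by
  rw [w3, w2, w1]
  simp only [sub3, psx, mul_pow, c3, c4, hxq, hyq, addc, mul_pow]
  ring
lemma h30 : (3 : R s) = 0 := by exact_mod_cast CharP.cast_eq_zero (R s) 3
lemma L6 : w6 s ^ q s = w6 s + w4 s ^ (3 * q0 s) * ell s := by
  rw [w6]
  simp only [addq, subq, mul_pow, cq3, hxq, hyq, L1, L2, L3, L4, Lv, add3, sub3, mul_pow,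
    c1, c2, c3, c4, addc, subc, addq0, subq0]
  rw [show w3 s = y s ^ 3 - x s * w2 s - x s * x s * w1 s from by linear_combination Lkey s]
  have hw1 : w1 s = x s * x s ^ (3 * q0 s) - y s ^ (3 * q0 s) := by rw [w1, psx]; ring
  have hw2 : w2 s = x s * y s ^ (3 * q0 s) - z s ^ (3 * q0 s) := rfl
  linear_combination (-(ell s ^ (3 * q0 s)) * (4 * x s * ell s + 3 * x s * x s + 2 * ell s * ell s)) * hw1
    + (ell s * ell s ^ (3 * q0 s)) * hw2
    + (ell s ^ (3 * q0 s) * (2 * x s * y s ^ (3 * q0 s) * ell s + y s ^ (3 * q0 s) * ell s ^ 2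
        - 2 * x s * x s ^ (3 * q0 s) * ell s ^ 2 - 2 * x s ^ 2 * x s ^ (3 * q0 s) * ell s
        - x s ^ (3 * q0 s) * ell s ^ 3 - x s ^ 3 * x s ^ (3 * q0 s) + x s ^ 2 * y s ^ (3 * q0 s))) * h30 s
set_option maxHeartbeats 2000000 in
lemma L8 : w8 s ^ q s = w8 s + w7 s ^ (3 * q0 s) * ell s := by
  rw [w8, w7]
  simp only [addq, subq, mul_pow, cq3, hxq, hyq, hzq, L1, L2, L3, L5, Lv, add3, sub3, mul_pow,
    c1, c2, c3, c4, addc, subc, addq0, subq0]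
  rw [show w3 s = y s ^ 3 - x s * w2 s - x s * x s * w1 s from by linear_combination Lkey s]
  have hw1 : w1 s = x s * x s ^ (3 * q0 s) - y s ^ (3 * q0 s) := by rw [w1, psx]; ring
  have hw2 : w2 s = x s * y s ^ (3 * q0 s) - z s ^ (3 * q0 s) := rfl
  linear_combination
    ((-1)*(ell s)^3*(ell s ^ (3*q0 s)) + (-3)*(x s)*(ell s)^2*(ell s ^ (3*q0 s)) + (-5)*(x s)^2*(ell s)*(ell s ^ (3*q0 s)) + (-3)*(x s)^3*(ell s ^ (3*q0 s))) * hw1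
    + ((-1)*(ell s)^2*(ell s ^ (3*q0 s)) + (-4)*(x s)*(ell s)*(ell s ^ (3*q0 s)) + (-3)*(x s)^2*(ell s ^ (3*q0 s))) * hw2
    + ((1)*(ell s)*(ell s ^ (3*q0 s))*(y s ^ 3) + (1)*(ell s)^2*(ell s ^ (3*q0 s))*(z s ^ (3*q0 s)) + (1)*(x s)*(ell s ^ (3*q0 s))*(y s ^ 3) + (2)*(x s)*(ell s)*(ell s ^ (3*q0 s))*(z s ^ (3*q0 s)) + (-1)*(x s)*(ell s)^3*(ell s ^ (3*q0 s))*(x s ^ (3*q0 s)) + (1)*(x s)^2*(ell s ^ (3*q0 s))*(z s ^ (3*q0 s)) + (-2)*(x s)^2*(ell s)^2*(ell s ^ (3*q0 s))*(x s ^ (3*q0 s)) + (-2)*(x s)^3*(ell s)*(ell s ^ (3*q0 s))*(x s ^ (3*q0 s)) + (-1)*(x s)^4*(ell s ^ (3*q0 s))*(x s ^ (3*q0 s))) * h30 s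
end

theorem stmt5 (s : ℕ) (hs : 1 ≤ s) :
    w1 s ^ q s - w1 s = x s ^ (3 * q0 s) * (x s ^ q s - x s) ∧
    w2 s ^ q s - w2 s = y s ^ (3 * q0 s) * (x s ^ q s - x s) ∧
    w3 s ^ q s - w3 s = z s ^ (3 * q0 s) * (x s ^ q s - x s) ∧
    w6 s ^ q s - w6 s = w4 s ^ (3 * q0 s) * (x s ^ q s - x s) ∧
    w8 s ^ q s - w8 s = w7 s ^ (3 * q0 s) * (x s ^ q s - x s) := by
  have e : ell s = x s ^ q s - x s := rfl
  refine ⟨?_, ?_, ?_, ?_, ?_⟩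
  · have h := L1 s; rw [e] at h; linear_combination h
  · have h := L2 s; rw [e] at h; linear_combination h
  · have h := L3 s; rw [e] at h; linear_combination h
  · have h := L6 s; rw [e] at h; linear_combination h
  · have h := L8 s; rw [e] at h; linear_combination h
end
end
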